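/- Let φ : [0,∞) → [0,∞) be continuous, increasing and subadditive with φ(0) = 0 and linear growth with constant ν > 0 (φ(x) ≤ ν(x+1) for all x ≥ 0), let μ > 0, and let g : ℝ × ℝ^d → ℝ satisfy |g(y₁, z₁) − g(y₂, z₂)| ≤ μ|y₁ − y₂| + φ(‖z₁ − z₂‖) for all (y₁, z₁), (y₂, z₂). For m > max(μ, ν) define the upper approximation ḡ_m(y, z) := sup{ g(a, b) − m(|y − a| + ‖z − b‖) : (a, b) ∈ ℚ × ℚ^d }. Then for every m > max(μ, ν): (i) ḡ_m(y, z) is finite (the supremum is < +∞) for every (y, z); (ii) ḡ_m is Lipschitz: |ḡ_m(y₁, z₁) − ḡ_m(y₂, z₂)| ≤ m(|y₁ − y₂| + ‖z₁ − z₂‖); (iii) ḡ_m(y, z) ≥ g(y, z); (iv) ḡ_m(y, z) is nonincreasing in m; and (v) for every (y, z), ḡ_m(y, z) → g(y, z) as m → ∞. -/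

import Mathlib

/-!
Each term of the supremum defining `ḡ_m(y, z)` is at most `g(y, z) + sup_{t ≥ 0} (φ t - m t)`
once `μ ≤ m`. Linear growth of `φ` makes this supremum at most `ν` when `ν ≤ m`, and continuity
of `φ` at `0` makes it tend to `0` as `m → ∞`. The Lipschitz bound and the monotonicity in `m`
hold term by term. Finally `g ≤ ḡ_m` is trivial at rational points, and extends everywhere since
both `g` and `ḡ_m` are continuous.
-/

/-- A vector in `ℝ^d` with the given rational coordinates. -/
noncomputable def ratVec (d : ℕ) (b : Fin d → ℚ) : EuclideanSpace ℝ (Fin d) :=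
  WithLp.toLp 2 (fun i => (b i : ℝ))

/-- The set `{ g(a,b) − m (|y − a| + ‖z − b‖) : (a,b) ∈ ℚ × ℚ^d }` appearing in the
Lepeltier–San Martin approximation (2.2) of the paper. -/
def upperApproxSet (d : ℕ) (g : ℝ → EuclideanSpace ℝ (Fin d) → ℝ) (m : ℝ)
    (y : ℝ) (z : EuclideanSpace ℝ (Fin d)) : Set ℝ :=
  {r : ℝ | ∃ (a : ℚ) (b : Fin d → ℚ),
    r = g (a : ℝ) (ratVec d b) - m * (|y - (a : ℝ)| + ‖z - ratVec d b‖)}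

/-- The Lepeltier–San Martin upper approximation `ḡ_m` (equation (2.2) of the paper). -/
noncomputable def upperApprox (d : ℕ) (g : ℝ → EuclideanSpace ℝ (Fin d) → ℝ) (m : ℝ)
    (y : ℝ) (z : EuclideanSpace ℝ (Fin d)) : ℝ :=
  sSup (upperApproxSet d g m y z)

open Filter Topology Set

lemma eventually_forall_sub_mul_le {φ : ℝ → ℝ} {ν : ℝ} (hν : 0 ≤ ν)
    (hφ : ContinuousWithinAt φ (Ici 0) 0) (hφ0 : φ 0 = 0)
    (hgrowth : ∀ t, 0 ≤ t → φ t ≤ ν * (t + 1)) {ε : ℝ} (hε : 0 < ε) :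
    ∀ᶠ m in atTop, ∀ t, 0 ≤ t → φ t - m * t ≤ ε := by
  obtain ⟨δ, hδ, hφδ⟩ := Metric.continuousWithinAt_iff.1 hφ ε hε
  filter_upwards [eventually_ge_atTop (ν + ν / δ)] with m hm t ht
  have hm0 : 0 ≤ m := le_trans (by positivity) hm
  rcases lt_or_ge t δ with htδ | hδt
  · have : |φ t| < ε := by
      simpa [hφ0, abs_of_nonneg ht] using hφδ (mem_Ici.2 ht) (by simpa [abs_of_nonneg ht])
    linarith [le_abs_self (φ t), mul_nonneg hm0 ht]
  · -- beyond `δ`, the constant `ν` of the linear growth is absorbed into the slope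
    have hν_le : ν ≤ ν / δ * t := by
      rw [div_mul_eq_mul_div, le_div_iff₀ hδ]
      exact mul_le_mul_of_nonneg_left hδt hν
    linarith [hgrowth t ht, mul_le_mul_of_nonneg_right hm ht]

lemma continuous_uncurry_of_abs_sub_le {E : Type*} [SeminormedAddCommGroup E]
    {F : ℝ → E → ℝ} {A : ℝ} {ψ : ℝ → ℝ} (hψ : ContinuousWithinAt ψ (Ici 0) 0) (hψ0 : ψ 0 = 0)
    (hF : ∀ y₁ y₂ z₁ z₂, |F y₁ z₁ - F y₂ z₂| ≤ A * |y₁ - y₂| + ψ ‖z₁ - z₂‖) :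
    Continuous (Function.uncurry F) := by
  refine continuous_iff_continuousAt.2 fun p => tendsto_iff_dist_tendsto_zero.2 ?_
  have hnorm : Tendsto (fun q : ℝ × E => ‖q.2 - p.2‖) (𝓝 p) (𝓝[Ici 0] 0) :=
    tendsto_nhdsWithin_iff.2
      ⟨by simpa using ((continuous_snd.sub (continuous_const (y := p.2))).norm.tendsto p),
        Eventually.of_forall fun q => norm_nonneg _⟩
  have hbound : Tendsto (fun q : ℝ × E => A * |q.1 - p.1| + ψ ‖q.2 - p.2‖) (𝓝 p) (𝓝 0) := by
    have hfst : Tendsto (fun q : ℝ × E => |q.1 - p.1|) (𝓝 p) (𝓝 0) := by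
      simpa using ((continuous_fst.sub (continuous_const (y := p.1))).abs.tendsto p)
    simpa [hψ0] using (hfst.const_mul A).add (hψ.tendsto.comp hnorm)
  exact squeeze_zero (fun _ => dist_nonneg) (fun q => (Real.dist_eq _ _).trans_le (hF _ _ _ _))
    hbound

lemma denseRange_ratVec (d : ℕ) : DenseRange (ratVec d) :=
  (WithLp.toLp_surjective 2).denseRange.comp (DenseRange.piMap fun _ => Rat.denseRange_cast)
    (PiLp.continuous_toLp 2 _)

section UpperApprox

variable {d : ℕ} {g : ℝ → EuclideanSpace ℝ (Fin d) → ℝ} {m : ℝ}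

lemma mem_upperApproxSet (a : ℚ) (b : Fin d → ℚ) (y : ℝ) (z : EuclideanSpace ℝ (Fin d)) :
    g a (ratVec d b) - m * (|y - a| + ‖z - ratVec d b‖) ∈ upperApproxSet d g m y z :=
  ⟨a, b, rfl⟩

lemma upperApproxSet_nonempty (y : ℝ) (z : EuclideanSpace ℝ (Fin d)) :
    (upperApproxSet d g m y z).Nonempty :=
  ⟨_, mem_upperApproxSet 0 0 y z⟩

lemma add_mem_upperBounds_upperApproxSet {μ C : ℝ} {φ : ℝ → ℝ}
    (hg : ∀ y₁ y₂ z₁ z₂, |g y₁ z₁ - g y₂ z₂| ≤ μ * |y₁ - y₂| + φ ‖z₁ - z₂‖) (hμm : μ ≤ m)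
    (hC : ∀ t, 0 ≤ t → φ t - m * t ≤ C) (y : ℝ) (z : EuclideanSpace ℝ (Fin d)) :
    g y z + C ∈ upperBounds (upperApproxSet d g m y z) := by
  rintro _ ⟨a, b, rfl⟩
  have hga := (le_abs_self _).trans (hg a y (ratVec d b) z)
  rw [abs_sub_comm, norm_sub_rev] at hga
  linarith [hC _ (norm_nonneg (z - ratVec d b)),
    mul_le_mul_of_nonneg_right hμm (abs_nonneg (y - a))]

lemma upperApprox_le_add {μ C : ℝ} {φ : ℝ → ℝ}
    (hg : ∀ y₁ y₂ z₁ z₂, |g y₁ z₁ - g y₂ z₂| ≤ μ * |y₁ - y₂| + φ ‖z₁ - z₂‖) (hμm : μ ≤ m)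
    (hC : ∀ t, 0 ≤ t → φ t - m * t ≤ C) (y : ℝ) (z : EuclideanSpace ℝ (Fin d)) :
    upperApprox d g m y z ≤ g y z + C :=
  csSup_le (upperApproxSet_nonempty y z) (add_mem_upperBounds_upperApproxSet hg hμm hC y z)

lemma bddAbove_upperApproxSet {μ ν : ℝ} {φ : ℝ → ℝ}
    (hg : ∀ y₁ y₂ z₁ z₂, |g y₁ z₁ - g y₂ z₂| ≤ μ * |y₁ - y₂| + φ ‖z₁ - z₂‖)
    (hgrowth : ∀ t, 0 ≤ t → φ t ≤ ν * (t + 1)) (hμm : μ ≤ m) (hνm : ν ≤ m)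
    (y : ℝ) (z : EuclideanSpace ℝ (Fin d)) : BddAbove (upperApproxSet d g m y z) :=
  ⟨_, add_mem_upperBounds_upperApproxSet hg hμm
    (fun t ht => by linarith [hgrowth t ht, mul_le_mul_of_nonneg_right hνm ht]) y z⟩

lemma upperApprox_le_upperApprox_add (hm : 0 ≤ m) {y₂ : ℝ} {z₂ : EuclideanSpace ℝ (Fin d)}
    (hbdd : BddAbove (upperApproxSet d g m y₂ z₂)) (y₁ : ℝ) (z₁ : EuclideanSpace ℝ (Fin d)) :
    upperApprox d g m y₁ z₁ ≤ upperApprox d g m y₂ z₂ + m * (|y₁ - y₂| + ‖z₁ - z₂‖) := by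
  refine csSup_le (upperApproxSet_nonempty y₁ z₁) ?_
  rintro _ ⟨a, b, rfl⟩
  have hle := le_csSup hbdd (mem_upperApproxSet a b y₂ z₂)
  have htri : |y₂ - a| + ‖z₂ - ratVec d b‖ ≤
      (|y₁ - a| + ‖z₁ - ratVec d b‖) + (|y₁ - y₂| + ‖z₁ - z₂‖) := by
    linarith [abs_sub_le y₂ y₁ a, abs_sub_comm y₂ y₁,
      norm_sub_le_norm_sub_add_norm_sub z₂ z₁ (ratVec d b), norm_sub_rev z₂ z₁]
  have := mul_le_mul_of_nonneg_left htri hm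
  unfold upperApprox
  linarith

lemma abs_upperApprox_sub_le (hm : 0 ≤ m) (hbdd : ∀ y z, BddAbove (upperApproxSet d g m y z))
    (y₁ y₂ : ℝ) (z₁ z₂ : EuclideanSpace ℝ (Fin d)) :
    |upperApprox d g m y₁ z₁ - upperApprox d g m y₂ z₂| ≤ m * (|y₁ - y₂| + ‖z₁ - z₂‖) := by
  have h₁ := upperApprox_le_upperApprox_add hm (hbdd y₂ z₂) y₁ z₁
  have h₂ := upperApprox_le_upperApprox_add hm (hbdd y₁ z₁) y₂ z₂
  rw [abs_sub_comm y₂, norm_sub_rev z₂] at h₂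
  exact abs_sub_le_iff.2 ⟨by linarith, by linarith⟩

lemma upperApprox_anti {m₁ m₂ : ℝ} (h : m₁ ≤ m₂) {y : ℝ} {z : EuclideanSpace ℝ (Fin d)}
    (hbdd : BddAbove (upperApproxSet d g m₁ y z)) :
    upperApprox d g m₂ y z ≤ upperApprox d g m₁ y z := by
  refine csSup_le (upperApproxSet_nonempty y z) ?_
  rintro _ ⟨a, b, rfl⟩
  have hle := le_csSup hbdd (mem_upperApproxSet a b y z)
  have := mul_le_mul_of_nonneg_right h
    (add_nonneg (abs_nonneg (y - a)) (norm_nonneg (z - ratVec d b)))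
  unfold upperApprox
  linarith

lemma le_upperApprox {μ : ℝ} {φ : ℝ → ℝ} (hφ : ContinuousWithinAt φ (Ici 0) 0) (hφ0 : φ 0 = 0)
    (hg : ∀ y₁ y₂ z₁ z₂, |g y₁ z₁ - g y₂ z₂| ≤ μ * |y₁ - y₂| + φ ‖z₁ - z₂‖) (hm : 0 ≤ m)
    (hbdd : ∀ y z, BddAbove (upperApproxSet d g m y z)) (y : ℝ) (z : EuclideanSpace ℝ (Fin d)) :
    g y z ≤ upperApprox d g m y z := by
  have hg_cont := continuous_uncurry_of_abs_sub_le hφ hφ0 hg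
  have hupper_cont := continuous_uncurry_of_abs_sub_le (continuous_const_mul m).continuousWithinAt
    (mul_zero m) (by simpa only [mul_add] using abs_upperApprox_sub_le hm hbdd)
  refine (Rat.denseRange_cast.prodMap (denseRange_ratVec d)).induction_on
    (p := fun p => Function.uncurry g p ≤ Function.uncurry (upperApprox d g m) p) (y, z)
    (isClosed_le hg_cont hupper_cont) fun ⟨a, b⟩ => ?_
  simpa [upperApprox] using
    le_csSup (hbdd a (ratVec d b)) (mem_upperApproxSet (m := m) a b a (ratVec d b))

lemma tendsto_upperApprox {μ ν : ℝ} {φ : ℝ → ℝ} (hν : 0 ≤ ν)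
    (hφ : ContinuousWithinAt φ (Ici 0) 0) (hφ0 : φ 0 = 0) (hgrowth : ∀ t, 0 ≤ t → φ t ≤ ν * (t + 1))
    (hg : ∀ y₁ y₂ z₁ z₂, |g y₁ z₁ - g y₂ z₂| ≤ μ * |y₁ - y₂| + φ ‖z₁ - z₂‖)
    (y : ℝ) (z : EuclideanSpace ℝ (Fin d)) :
    Tendsto (fun m => upperApprox d g m y z) atTop (𝓝 (g y z)) := by
  refine Metric.tendsto_nhds.2 fun ε hε => ?_
  filter_upwards [eventually_forall_sub_mul_le hν hφ hφ0 hgrowth (half_pos hε),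
    eventually_ge_atTop μ, eventually_ge_atTop ν] with m hφm hμm hνm
  have hlow := le_upperApprox hφ hφ0 hg (hν.trans hνm)
    (bddAbove_upperApproxSet hg hgrowth hμm hνm) y z
  have hup := upperApprox_le_add hg hμm hφm y z
  rw [Real.dist_eq, abs_lt]
  constructor <;> linarith

end UpperApprox

theorem stmt_3_general (d : ℕ) (μ ν : ℝ) (hν : 0 < ν)
    (φ : ℝ → ℝ)
    (hφ_cont : ContinuousOn φ (Set.Ici 0))
    (hφ0 : φ 0 = 0)
    (hφ_growth : ∀ x, 0 ≤ x → φ x ≤ ν * (x + 1))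
    (g : ℝ → EuclideanSpace ℝ (Fin d) → ℝ)
    (hg : ∀ (y₁ y₂ : ℝ) (z₁ z₂ : EuclideanSpace ℝ (Fin d)),
      |g y₁ z₁ - g y₂ z₂| ≤ μ * |y₁ - y₂| + φ ‖z₁ - z₂‖) :
    (∀ m, max μ ν < m →
      -- (i) finiteness of the supremum
      (∀ (y : ℝ) (z : EuclideanSpace ℝ (Fin d)), BddAbove (upperApproxSet d g m y z)) ∧
      -- (ii) Lipschitz continuity with constant m
      (∀ (y₁ y₂ : ℝ) (z₁ z₂ : EuclideanSpace ℝ (Fin d)),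
        |upperApprox d g m y₁ z₁ - upperApprox d g m y₂ z₂| ≤
          m * (|y₁ - y₂| + ‖z₁ - z₂‖)) ∧
      -- (iii) g ≤ ḡ_m
      (∀ (y : ℝ) (z : EuclideanSpace ℝ (Fin d)), g y z ≤ upperApprox d g m y z)) ∧
    -- (iv) antitonicity in m
    (∀ m₁ m₂, max μ ν < m₁ → m₁ ≤ m₂ →
      ∀ (y : ℝ) (z : EuclideanSpace ℝ (Fin d)),
        upperApprox d g m₂ y z ≤ upperApprox d g m₁ y z) ∧
    -- (v) pointwise convergence as m → ∞
    (∀ (y : ℝ) (z : EuclideanSpace ℝ (Fin d)),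
      Filter.Tendsto (fun m => upperApprox d g m y z) Filter.atTop (nhds (g y z))) := by
  have hφ := hφ_cont 0 self_mem_Ici
  have hbdd : ∀ m, max μ ν < m → ∀ y z, BddAbove (upperApproxSet d g m y z) := fun m hm =>
    bddAbove_upperApproxSet hg hφ_growth (le_max_left μ ν |>.trans hm.le)
      (le_max_right μ ν |>.trans hm.le)
  refine ⟨fun m hm => ?_, fun m₁ m₂ hm₁ h y z => upperApprox_anti h (hbdd m₁ hm₁ y z),
    tendsto_upperApprox hν.le hφ hφ0 hφ_growth hg⟩
  have hm0 : 0 ≤ m := hν.le.trans (le_max_right μ ν |>.trans hm.le)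
  exact ⟨hbdd m hm, abs_upperApprox_sub_le hm0 (hbdd m hm),
    le_upperApprox hφ hφ0 hg hm0 (hbdd m hm)⟩

/-- Properties of the upper approximation `ḡ_m`:
finiteness, `m`-Lipschitz continuity, `ḡ_m ≥ g`, antitonicity in `m`, and pointwise
convergence `ḡ_m → g` as `m → ∞`. -/
theorem stmt_3 (d : ℕ) (hd : 1 ≤ d) (μ ν : ℝ) (hμ : 0 < μ) (hν : 0 < ν)
    (φ : ℝ → ℝ)
    (hφ_cont : ContinuousOn φ (Set.Ici 0))
    (hφ_nonneg : ∀ x, 0 ≤ x → 0 ≤ φ x)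
    (hφ_mono : ∀ a b, 0 ≤ a → a ≤ b → φ a ≤ φ b)
    (hφ_subadd : ∀ a b, 0 ≤ a → 0 ≤ b → φ (a + b) ≤ φ a + φ b)
    (hφ0 : φ 0 = 0)
    (hφ_growth : ∀ x, 0 ≤ x → φ x ≤ ν * (x + 1))
    (g : ℝ → EuclideanSpace ℝ (Fin d) → ℝ)
    (hg : ∀ (y₁ y₂ : ℝ) (z₁ z₂ : EuclideanSpace ℝ (Fin d)),
      |g y₁ z₁ - g y₂ z₂| ≤ μ * |y₁ - y₂| + φ ‖z₁ - z₂‖) :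
    (∀ m, max μ ν < m →
      -- (i) finiteness of the supremum
      (∀ (y : ℝ) (z : EuclideanSpace ℝ (Fin d)), BddAbove (upperApproxSet d g m y z)) ∧
      -- (ii) Lipschitz continuity with constant m
      (∀ (y₁ y₂ : ℝ) (z₁ z₂ : EuclideanSpace ℝ (Fin d)),
        |upperApprox d g m y₁ z₁ - upperApprox d g m y₂ z₂| ≤
          m * (|y₁ - y₂| + ‖z₁ - z₂‖)) ∧
      -- (iii) g ≤ ḡ_m
      (∀ (y : ℝ) (z : EuclideanSpace ℝ (Fin d)), g y z ≤ upperApprox d g m y z)) ∧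
    -- (iv) antitonicity in m
    (∀ m₁ m₂, max μ ν < m₁ → m₁ ≤ m₂ →
      ∀ (y : ℝ) (z : EuclideanSpace ℝ (Fin d)),
        upperApprox d g m₂ y z ≤ upperApprox d g m₁ y z) ∧
    -- (v) pointwise convergence as m → ∞
    (∀ (y : ℝ) (z : EuclideanSpace ℝ (Fin d)),
      Filter.Tendsto (fun m => upperApprox d g m y z) Filter.atTop (nhds (g y z))) :=
  stmt_3_general d μ ν hν φ hφ_cont hφ0 hφ_growth g hg
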